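/- arXiv:2506.22271 — 10 statements merged into one kernel-verified Lean document; each statement's English description precedes it below -/
import Mathlib

section
/- Let N and d be positive integers with d < N − 1, and let E ∈ ℝ^{N×d} be any matrix with rows e₁, …, e_N. Then there exists a permutation π of {1, …, N} that is not realizable as a ranking: there is no vector h ∈ ℝ^d such that e_{π(1)} · h > e_{π(2)} · h > ⋯ > e_{π(N)} · h. That is, some strict ordering of the N scores (E h)_1, …, (E h)_N is infeasible regardless of the choice of h. -/
/-- If `d < N - 1`, then for any matrix `E : ℝ^{N×d}` there is a permutation `π` of the
rows such that no vector `h` induces the strict decreasing ordering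
`(E h)_{π 0} > (E h)_{π 1} > ⋯ > (E h)_{π (N-1)}`. -/
theorem exists_unrealizable_ranking
    (N d : ℕ) (hN : 0 < N) (hd : 0 < d) (hdN : d < N - 1)
    (E : Matrix (Fin N) (Fin d) ℝ) :
    ∃ π : Equiv.Perm (Fin N),
      ¬ ∃ h : Fin d → ℝ, StrictAnti (fun i : Fin N => E.mulVec h (π i)) := by
  classical
  have hle : d + 2 ≤ N := by omega
  set ι : Fin (d+2) → Fin N := Fin.castLE hle with hιdef
  have hι : Function.Injective ι := Fin.castLE_injective hle
  set v : Fin (d+2) → (Fin (d+1) → ℝ) := fun k => Fin.cons 1 (E (ι k)) with hv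
  have hnli : ¬ LinearIndependent ℝ v := by
    intro hli
    have := hli.fintype_card_le_finrank
    simp [Module.finrank_fintype_fun_eq_card] at this
  rw [Fintype.not_linearIndependent_iff] at hnli
  obtain ⟨g, hsum, k0, hk0⟩ := hnli
  have hg0 : ∑ k, g k = 0 := by
    have := congrFun hsum 0
    simpa [Finset.sum_apply, hv] using this
  have hgE : ∀ j : Fin d, ∑ k, g k * E (ι k) j = 0 := by
    intro j
    have := congrFun hsum j.succ
    simpa [Finset.sum_apply, hv] using this
  have hpos : ∃ k, 0 < g k := by
    by_contra hc
    push_neg at hc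
    have hz : ∀ k ∈ Finset.univ, g k = 0 :=
      (Finset.sum_eq_zero_iff_of_nonpos (fun k _ => hc k)).mp hg0
    exact hk0 (hz k0 (Finset.mem_univ _))
  have hneg : ∃ k, g k < 0 := by
    by_contra hc
    push_neg at hc
    have hz : ∀ k ∈ Finset.univ, g k = 0 :=
      (Finset.sum_eq_zero_iff_of_nonneg (fun k _ => hc k)).mp hg0
    exact hk0 (hz k0 (Finset.mem_univ _))
  set f : Fin N → ℕ := fun i =>
    if ∃ k, ι k = i ∧ 0 < g k then 0 else if ∃ k, ι k = i ∧ g k < 0 then 1 else 2 with hf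
  refine ⟨Tuple.sort f, ?_⟩
  rintro ⟨h, hanti⟩
  set s : Fin N → ℝ := E.mulVec h with hs
  have key : ∀ k l, 0 < g k → g l < 0 → s (ι l) < s (ι k) := by
    intro k l hk hl
    have hfk : f (ι k) = 0 := by
      rw [hf]
      exact if_pos ⟨k, rfl, hk⟩
    have hfl : f (ι l) = 1 := by
      rw [hf]
      have hno : ¬ ∃ k', ι k' = ι l ∧ 0 < g k' := by
        rintro ⟨k', hk', hk'pos⟩
        have := hι hk'
        subst this
        exact absurd hl (not_lt.2 hk'pos.le)
      have hrfl : (fun i => if ∃ k, ι k = i ∧ 0 < g k then (0:ℕ) else if ∃ k, ι k = i ∧ g k < 0 then 1 else 2) (ι l) = if ∃ k', ι k' = ι l ∧ 0 < g k' then (0:ℕ) else if ∃ k', ι k' = ι l ∧ g k' < 0 then 1 else 2 := rfl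
      rw [hrfl, if_neg hno, if_pos ⟨l, rfl, hl⟩]
    have hmono : Monotone (f ∘ Tuple.sort f) := Tuple.monotone_sort f
    have hab : (Tuple.sort f).symm (ι k) < (Tuple.sort f).symm (ι l) := by
      by_contra hba
      push_neg at hba
      have := hmono hba
      simp only [Function.comp_apply, Equiv.apply_symm_apply, hfk, hfl] at this
      omega
    have := hanti hab
    simpa [Equiv.apply_symm_apply] using this
  have hsι : ∀ k, s (ι k) = ∑ j, E (ι k) j * h j := by
    intro k
    simp [hs, Matrix.mulVec, dotProduct]
  have hgs : ∑ k, g k * s (ι k) = 0 := by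
    calc ∑ k, g k * s (ι k) = ∑ k, ∑ j, g k * (E (ι k) j * h j) := by
          simp_rw [hsι, Finset.mul_sum]
      _ = ∑ j, (∑ k, g k * E (ι k) j) * h j := by
          rw [Finset.sum_comm]
          refine Finset.sum_congr rfl fun j _ => ?_
          rw [Finset.sum_mul]
          exact Finset.sum_congr rfl fun k _ => by ring
      _ = 0 := by simp [hgE]
  obtain ⟨kp, hkp⟩ := hpos
  obtain ⟨kn, hkn⟩ := hneg
  obtain ⟨b, hbmem, hb⟩ := Finset.exists_max_image
    (Finset.univ.filter (fun k => g k < 0)) (fun k => s (ι k)) ⟨kn, by simp [hkn]⟩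
  have hbneg : g b < 0 := (Finset.mem_filter.mp hbmem).2
  set t := s (ι b) with ht
  have hterm : ∀ k, 0 ≤ g k * (s (ι k) - t) := by
    intro k
    rcases lt_trichotomy (g k) 0 with hk | hk | hk
    · have h1 : s (ι k) ≤ t := hb k (by simp [hk])
      nlinarith [sub_nonpos.mpr h1]
    · simp [hk]
    · exact mul_nonneg hk.le (sub_nonneg.mpr (key k b hk hbneg).le)
  have hsumpos : 0 < ∑ k, g k * (s (ι k) - t) :=
    Finset.sum_pos' (fun k _ => hterm k)
      ⟨kp, Finset.mem_univ _, mul_pos hkp (sub_pos.mpr (key kp b hkp hbneg))⟩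
  have hzero : ∑ k, g k * (s (ι k) - t) = 0 := by
    simp_rw [mul_sub]
    rw [Finset.sum_sub_distrib, hgs, ← Finset.sum_mul, hg0]
    ring
  linarith
end

section
/- Let V be a linear subspace of ℝ^N with dim V < N. Then there exists a sign vector s ∈ {+1, −1}^N such that no x ∈ V satisfies s_i x_i > 0 for all i ∈ {1, …, N}; that is, V is disjoint from the open orthant of ℝ^N determined by s. -/
/-- A proper linear subspace `V` of `ℝ^N` misses some open orthant: there is a sign
vector `s ∈ {+1, -1}^N` such that no `x ∈ V` satisfies `s_i * x_i > 0` for all `i`. -/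
theorem exists_orthant_disjoint_from_proper_subspace
    (N : ℕ) (V : Submodule ℝ (Fin N → ℝ)) (hV : Module.finrank ℝ V < N) :
    ∃ s : Fin N → ℝ, (∀ i, s i = 1 ∨ s i = -1) ∧
      ∀ x ∈ V, ¬ ∀ i, 0 < s i * x i := by
  have hVtop : V < ⊤ := by
    refine lt_top_iff_ne_top.mpr fun h => ?_
    rw [h] at hV
    simp [finrank_top, Module.finrank_fin_fun] at hV
  obtain ⟨f, hf0, hfV⟩ := Submodule.exists_dual_map_eq_bot_of_lt_top hVtop inferInstance
  set c : Fin N → ℝ := fun i => f (fun j => if i = j then 1 else 0) with hc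
  have hfc : ∀ x, f x = ∑ i, x i * c i := by
    intro x
    rw [LinearMap.pi_apply_eq_sum_univ f x]
    simp [hc, smul_eq_mul]
  have hcne : ∃ i, c i ≠ 0 := by
    by_contra h
    push_neg at h
    apply hf0
    apply LinearMap.ext
    intro x
    rw [hfc x]
    simp [h]
  refine ⟨fun i => if c i < 0 then -1 else 1, fun i => by by_cases h : c i < 0 <;> simp [h], ?_⟩
  intro x hx hpos
  have hfx : f x = 0 := by
    have : f x ∈ V.map f := Submodule.mem_map_of_mem hx
    rwa [hfV, Submodule.mem_bot] at this
  have hterm : ∀ i, 0 ≤ x i * c i := by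
    intro i
    have := hpos i
    by_cases h : c i < 0
    · simp only [h, if_pos] at this
      have hxneg : x i < 0 := by nlinarith
      exact le_of_lt (mul_pos_of_neg_of_neg hxneg h)
    · simp only [h, if_neg, one_mul, if_false] at this
      push_neg at h
      positivity
  obtain ⟨i0, hi0⟩ := hcne
  have hstrict : 0 < x i0 * c i0 := by
    have := hpos i0
    by_cases h : c i0 < 0
    · simp only [h, if_pos] at this
      have hxneg : x i0 < 0 := by nlinarith
      exact mul_pos_of_neg_of_neg hxneg h
    · simp only [h, if_neg, one_mul, if_false] at this
      push_neg at h
      exact mul_pos this (lt_of_le_of_ne h (Ne.symm hi0))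
  have : 0 < ∑ i, x i * c i :=
    Finset.sum_pos' (fun i _ => hterm i) ⟨i0, Finset.mem_univ i0, hstrict⟩
  rw [hfc x] at hfx
  linarith
end

section
/- Let N and d be positive integers and let E ∈ ℝ^{N×d} be any matrix. Then the number of sign vectors y ∈ {+1, −1}^N for which there exists h ∈ ℝ^d with y_i (E h)_i > 0 for all i ∈ {1, …, N} is at most 2 · Σ_{i=0}^{d−1} C(N−1, i), where C(·,·) denotes the binomial coefficient. -/
open Finset in
lemma choose_sum_pascal (m d : ℕ) :
    ∑ i ∈ range (d+1), (m+1).choose i =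
      ∑ i ∈ range (d+1), m.choose i + ∑ i ∈ range d, m.choose i := by
  induction d with
  | zero => simp
  | succ d ih =>
    rw [Finset.sum_range_succ, ih, Finset.sum_range_succ (f := fun i => m.choose i) (n := d+1),
      Finset.sum_range_succ (f := fun i => m.choose i) (n := d), Nat.choose_succ_succ]
    ring

lemma signs_finite (n : ℕ) (P : (Fin n → ℝ) → Prop) :
    {y : Fin n → ℝ | (∀ i, y i = 1 ∨ y i = -1) ∧ P y}.Finite := by
  apply Set.Finite.subset (Set.Finite.pi (fun i : Fin n => (Set.finite_singleton (1:ℝ)).insert (-1)))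
  intro y hy
  simp only [Set.mem_pi, Set.mem_univ, Set.mem_insert_iff, Set.mem_singleton_iff, forall_true_left]
  intro i
  exact (hy.1 i).symm

lemma rank_zero_empty (n : ℕ) (V : Type) [AddCommGroup V] [Module ℝ V]
    [FiniteDimensional ℝ V] (h0 : Module.finrank ℝ V = 0)
    (f : Fin (n+1) → V →ₗ[ℝ] ℝ) :
    {y : Fin (n+1) → ℝ | (∀ i, y i = 1 ∨ y i = -1) ∧
        ∃ h : V, ∀ i, 0 < y i * f i h} = ∅ := by
  have : Subsingleton V := Module.finrank_zero_iff.mp h0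
  ext y
  simp only [Set.mem_setOf_eq, Set.mem_empty_iff_false, iff_false, not_and]
  rintro - ⟨h, hh⟩
  have hz : h = 0 := Subsingleton.elim _ _
  have := hh 0
  rw [hz] at this
  simp at this

lemma aux_cover : ∀ (n : ℕ) (V : Type) [AddCommGroup V] [Module ℝ V]
    [FiniteDimensional ℝ V] (d : ℕ), Module.finrank ℝ V ≤ d →
    ∀ f : Fin (n+1) → V →ₗ[ℝ] ℝ,
    {y : Fin (n+1) → ℝ | (∀ i, y i = 1 ∨ y i = -1) ∧
        ∃ h : V, ∀ i, 0 < y i * f i h}.ncard ≤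
      2 * ∑ i ∈ Finset.range d, n.choose i := by
  intro n
  induction n with
  | zero =>
    intro V _ _ _ d hd f
    match d with
    | 0 =>
      rw [rank_zero_empty 0 V (Nat.le_zero.mp hd) f]
      simp
    | d + 1 =>
      have hsub : {y : Fin 1 → ℝ | (∀ i, y i = 1 ∨ y i = -1) ∧
          ∃ h : V, ∀ i, 0 < y i * f i h} ⊆ {(fun _ => 1 : Fin 1 → ℝ), fun _ => -1} := by
        rintro y ⟨hy, -⟩
        rcases hy 0 with h1 | h1
        · left; funext i; rw [Fin.eq_zero i]; exact h1
        · right; funext i; rw [Fin.eq_zero i]; exact h1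
      calc _ ≤ ({(fun _ => 1 : Fin 1 → ℝ), fun _ => -1} : Set (Fin 1 → ℝ)).ncard :=
            Set.ncard_le_ncard hsub (Set.toFinite _)
        _ ≤ 2 := by
            apply le_trans (Set.ncard_insert_le _ _); simp
        _ ≤ _ := by
            have : 1 ≤ ∑ i ∈ Finset.range (d+1), Nat.choose 0 i := by
              calc 1 = Nat.choose 0 0 := rfl
                _ ≤ _ := Finset.single_le_sum (f := fun i => Nat.choose 0 i)
                    (by intro i _; positivity) (Finset.mem_range.mpr (Nat.succ_pos d))
            omega
  | succ m ih =>
    intro V _ _ _ d hd f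
    match d with
    | 0 =>
      rw [rank_zero_empty _ V (Nat.le_zero.mp hd) f]
      simp
    | d + 1 =>
      by_cases hL : f (Fin.last (m+1)) = 0
      · have hempty : {y : Fin (m+2) → ℝ | (∀ i, y i = 1 ∨ y i = -1) ∧
            ∃ h : V, ∀ i, 0 < y i * f i h} = ∅ := by
          ext y
          simp only [Set.mem_setOf_eq, Set.mem_empty_iff_false, iff_false, not_and]
          rintro - ⟨h, hh⟩
          have := hh (Fin.last (m+1))
          rw [hL] at this
          simp at this
        rw [hempty]
        simp
      · -- main case
        set K := LinearMap.ker (f (Fin.last (m+1))) with hKdef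
        have hK : Module.finrank ℝ K ≤ d := by
          rw [hKdef]
          have h1 : Module.finrank ℝ (LinearMap.range (f (Fin.last (m+1)))) = 1 := by
            have htop : LinearMap.range (f (Fin.last (m+1))) = ⊤ := by
              rw [LinearMap.range_eq_top]
              exact LinearMap.surjective_of_ne_zero hL
            rw [htop, finrank_top, Module.finrank_self]
          have h2 := LinearMap.finrank_range_add_finrank_ker (f (Fin.last (m+1)))
          omega
        set S := {y : Fin (m+2) → ℝ | (∀ i, y i = 1 ∨ y i = -1) ∧
            ∃ h : V, ∀ i, 0 < y i * f i h} with hSdef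
        set Sp := {y ∈ S | y (Fin.last (m+1)) = 1} with hSpdef
        set Sm := {y ∈ S | y (Fin.last (m+1)) = -1} with hSmdef
        set r : (Fin (m+2) → ℝ) → (Fin (m+1) → ℝ) := fun y => y ∘ Fin.castSucc with hrdef
        set T := {z : Fin (m+1) → ℝ | (∀ i, z i = 1 ∨ z i = -1) ∧
            ∃ h : V, ∀ i, 0 < z i * f i.castSucc h} with hTdef
        set T2 := {z : Fin (m+1) → ℝ | (∀ i, z i = 1 ∨ z i = -1) ∧
            ∃ h : K, ∀ i, 0 < z i * ((f i.castSucc).comp K.subtype) h} with hT2def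
        have hSfin : S.Finite := signs_finite _ _
        have hSpfin : Sp.Finite := hSfin.subset (Set.sep_subset _ _)
        have hSmfin : Sm.Finite := hSfin.subset (Set.sep_subset _ _)
        -- S = Sp ∪ Sm
        have hcup : S = Sp ∪ Sm := by
          ext y
          simp only [hSpdef, hSmdef, Set.mem_union, Set.mem_setOf_eq]
          constructor
          · intro hy
            rcases hy.1 (Fin.last (m+1)) with h | h
            · exact Or.inl ⟨hy, h⟩
            · exact Or.inr ⟨hy, h⟩
          · rintro (⟨hy, -⟩ | ⟨hy, -⟩) <;> exact hy
        have hdisj : Disjoint Sp Sm := by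
          rw [Set.disjoint_left]
          rintro y ⟨-, h1⟩ ⟨-, h2⟩
          rw [h1] at h2
          norm_num at h2
        have hinjp : Set.InjOn r Sp := by
          rintro y1 ⟨-, e1⟩ y2 ⟨-, e2⟩ hr
          funext i
          induction i using Fin.lastCases with
          | last => rw [e1, e2]
          | cast j => exact congrFun hr j
        have hinjm : Set.InjOn r Sm := by
          rintro y1 ⟨-, e1⟩ y2 ⟨-, e2⟩ hr
          funext i
          induction i using Fin.lastCases with
          | last => rw [e1, e2]
          | cast j => exact congrFun hr j
        have hsubT : r '' Sp ∪ r '' Sm ⊆ T := by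
          rintro z (⟨y, ⟨⟨hy1, h, hy2⟩, -⟩, rfl⟩ | ⟨y, ⟨⟨hy1, h, hy2⟩, -⟩, rfl⟩) <;>
            exact ⟨fun i => hy1 i.castSucc, h, fun i => hy2 i.castSucc⟩
        have hsubT2 : r '' Sp ∩ r '' Sm ⊆ T2 := by
          rintro z ⟨⟨yp, ⟨⟨hyp1, hp, hyp2⟩, ep⟩, rfl⟩, ⟨ym, ⟨⟨hym1, hm, hym2⟩, em⟩, hzm⟩⟩
          refine ⟨fun i => hyp1 i.castSucc, ?_⟩
          -- convexity argument
          have ha : 0 < f (Fin.last (m+1)) hp := by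
            have := hyp2 (Fin.last (m+1)); rw [ep] at this; linarith
          have hb : f (Fin.last (m+1)) hm < 0 := by
            have := hym2 (Fin.last (m+1)); rw [em] at this; nlinarith
          set a := f (Fin.last (m+1)) hp
          set b := -(f (Fin.last (m+1)) hm) with hbdef
          have hbpos : 0 < b := by simp [hbdef]; linarith
          set h0 : V := b • hp + a • hm with hh0def
          have hker : h0 ∈ K := by
            rw [hKdef, LinearMap.mem_ker, hh0def]
            simp only [map_add, map_smul, smul_eq_mul]
            simp only [hbdef]
            ring
          refine ⟨⟨h0, hker⟩, fun i => ?_⟩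
          have hzi : ym i.castSucc = yp i.castSucc := congrFun hzm i
          have h1 : 0 < yp i.castSucc * f i.castSucc hp := hyp2 i.castSucc
          have h2 : 0 < yp i.castSucc * f i.castSucc hm := by
            have h3 := hym2 i.castSucc
            rwa [hzi] at h3
          show 0 < yp i.castSucc * f i.castSucc h0
          rw [hh0def]
          simp only [map_add, map_smul, smul_eq_mul]
          nlinarith
        -- cardinality bookkeeping
        have e1 : S.ncard = Sp.ncard + Sm.ncard := by
          rw [hcup]
          exact Set.ncard_union_eq hdisj hSpfin hSmfin
        have e2 : Sp.ncard = (r '' Sp).ncard := (Set.ncard_image_of_injOn hinjp).symm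
        have e3 : Sm.ncard = (r '' Sm).ncard := (Set.ncard_image_of_injOn hinjm).symm
        have e4 : (r '' Sp).ncard + (r '' Sm).ncard =
            (r '' Sp ∪ r '' Sm).ncard + (r '' Sp ∩ r '' Sm).ncard :=
          (Set.ncard_union_add_ncard_inter _ _ (hSpfin.image r) (hSmfin.image r)).symm
        have hTfin : T.Finite := signs_finite _ _
        have hT2fin : T2.Finite := signs_finite _ _
        have e5 : (r '' Sp ∪ r '' Sm).ncard ≤ T.ncard := Set.ncard_le_ncard hsubT hTfin
        have e6 : (r '' Sp ∩ r '' Sm).ncard ≤ T2.ncard := Set.ncard_le_ncard hsubT2 hT2fin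
        have e7 : T.ncard ≤ 2 * ∑ i ∈ Finset.range (d+1), m.choose i :=
          ih V (d+1) hd (fun i => f i.castSucc)
        have e8 : T2.ncard ≤ 2 * ∑ i ∈ Finset.range d, m.choose i :=
          ih K d hK (fun i => (f i.castSucc).comp K.subtype)
        have := choose_sum_pascal m d
        omega

/-- The number of sign vectors `y ∈ {+1, -1}^N` realizable as strict sign patterns of
`E h` for some `h ∈ ℝ^d` is at most `2 · Σ_{i=0}^{d-1} C(N-1, i)`. -/
theorem card_realizable_sign_patterns_le
    (N d : ℕ) (hN : 0 < N) (hd : 0 < d)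
    (E : Matrix (Fin N) (Fin d) ℝ) :
    {y : Fin N → ℝ | (∀ i, y i = 1 ∨ y i = -1) ∧
        ∃ h : Fin d → ℝ, ∀ i, 0 < y i * E.mulVec h i}.ncard ≤
      2 * ∑ i ∈ Finset.range d, (N - 1).choose i := by
  obtain ⟨n, rfl⟩ : ∃ n, N = n + 1 := ⟨N - 1, (Nat.succ_pred_eq_of_pos hN).symm⟩
  have hfr : Module.finrank ℝ (Fin d → ℝ) ≤ d := by
    simp [Module.finrank_fintype_fun_eq_card]
  have key := aux_cover n (Fin d → ℝ) d hfr (fun i => LinearMap.proj i ∘ₗ E.mulVecLin)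
  have hset : {y : Fin (n+1) → ℝ | (∀ i, y i = 1 ∨ y i = -1) ∧
      ∃ h : Fin d → ℝ, ∀ i, 0 < y i * E.mulVec h i} =
      {y : Fin (n+1) → ℝ | (∀ i, y i = 1 ∨ y i = -1) ∧
      ∃ h : Fin d → ℝ, ∀ i, 0 < y i * (LinearMap.proj i ∘ₗ E.mulVecLin) h} := rfl
  rw [hset]
  simpa using key
end

section
/- Let N and d be positive integers, let E ∈ ℝ^{N×d} be any matrix and b ∈ ℝ^N any vector. Then the number of sign vectors y ∈ {+1, −1}^N for which there exists h ∈ ℝ^d with y_i ((E h)_i + b_i) > 0 for all i ∈ {1, …, N} is at most Σ_{k=0}^{d} C(N, k), where C(·,·) denotes the binomial coefficient. -/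
open Finset

/-- Auxiliary: for a nontrivial linear relation among the rows of `E` supported on `s`,
with nonnegative combination of the biases, the family of realizable subsets
cannot shatter `s`. -/
lemma aux_no_shatter
    (N d : ℕ) (E : Matrix (Fin N) (Fin d) ℝ) (b : Fin N → ℝ)
    (F : Finset (Finset (Fin N)))
    (hF : ∀ u ∈ F, ∃ h : Fin d → ℝ, ∀ i,
      (i ∈ u → 0 < E.mulVec h i + b i) ∧ (i ∉ u → E.mulVec h i + b i < 0))
    (s : Finset (Fin N)) (G : Fin N → ℝ)
    (hsupp : ∀ i, i ∉ s → G i = 0)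
    (hrel : ∀ j, ∑ i ∈ s, G i * E i j = 0)
    (hc : 0 ≤ ∑ i ∈ s, G i * b i)
    (i₀ : Fin N) (hi₀ : i₀ ∈ s) (hGi₀ : G i₀ ≠ 0) :
    ¬ F.Shatters s := by
  classical
  intro hsh
  obtain ⟨u, huF, hsu⟩ := hsh (Finset.filter_subset (fun i => G i < 0) s)
  obtain ⟨h, hh⟩ := hF u huF
  set σ : Fin N → ℝ := fun i => E.mulVec h i + b i with hσ
  -- each term G i * σ i ≤ 0 on s, strictly at i₀
  have key : ∀ i ∈ s, G i ≠ 0 → G i * σ i < 0 := by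
    intro i hi hGi
    rcases lt_or_gt_of_ne hGi with hneg | hpos
    · have hit : i ∈ s ∩ u := by
        rw [hsu]; exact Finset.mem_filter.2 ⟨hi, hneg⟩
      exact mul_neg_of_neg_of_pos hneg ((hh i).1 (Finset.mem_inter.1 hit).2)
    · have hiu : i ∉ u := by
        intro hiu
        have hmem : i ∈ s ∩ u := Finset.mem_inter.2 ⟨hi, hiu⟩
        rw [hsu] at hmem
        exact absurd (Finset.mem_filter.1 hmem).2 (not_lt.2 hpos.le)
      exact mul_neg_of_pos_of_neg hpos ((hh i).2 hiu)
  have hsum_le : ∑ i ∈ s, G i * σ i < 0 := by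
    have : ∑ i ∈ s, G i * σ i < ∑ i ∈ s, (0 : ℝ) := by
      apply Finset.sum_lt_sum
      · intro i hi
        by_cases hGi : G i = 0
        · simp [hGi]
        · exact (key i hi hGi).le
      · exact ⟨i₀, hi₀, key i₀ hi₀ hGi₀⟩
    simpa using this
  -- but the sum equals ∑ G i * b i ≥ 0
  have hsum_eq : ∑ i ∈ s, G i * σ i = ∑ i ∈ s, G i * b i := by
    have : ∑ i ∈ s, G i * E.mulVec h i = 0 := by
      have : ∑ i ∈ s, G i * E.mulVec h i
          = ∑ j, (∑ i ∈ s, G i * E i j) * h j := by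
        simp only [Matrix.mulVec, dotProduct, Finset.mul_sum, Finset.sum_mul]
        rw [Finset.sum_comm]
        congr 1; ext i; congr 1; ext j; ring
      rw [this]
      simp [hrel]
    calc ∑ i ∈ s, G i * σ i
        = ∑ i ∈ s, (G i * E.mulVec h i + G i * b i) := by
          apply Finset.sum_congr rfl; intro i _; simp [hσ]; ring
      _ = ∑ i ∈ s, G i * b i := by rw [Finset.sum_add_distrib, this, zero_add]
  rw [hsum_eq] at hsum_le
  exact absurd hc (not_le.2 hsum_le)

/-- The number of sign vectors `y ∈ {+1, -1}^N` realizable as strict sign patterns of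
the affine scores `E h + b` for some `h ∈ ℝ^d` is at most `Σ_{k=0}^{d} C(N, k)`. -/
theorem card_realizable_affine_sign_patterns_le
    (N d : ℕ) (hN : 0 < N) (hd : 0 < d)
    (E : Matrix (Fin N) (Fin d) ℝ) (b : Fin N → ℝ) :
    {y : Fin N → ℝ | (∀ i, y i = 1 ∨ y i = -1) ∧
        ∃ h : Fin d → ℝ, ∀ i, 0 < y i * (E.mulVec h i + b i)}.ncard ≤
      ∑ k ∈ Finset.range (d + 1), N.choose k := by
  classical
  set F : Finset (Finset (Fin N)) :=
    Finset.univ.filter (fun u => ∃ h : Fin d → ℝ, ∀ i,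
      (i ∈ u → 0 < E.mulVec h i + b i) ∧ (i ∉ u → E.mulVec h i + b i < 0)) with hFdef
  have hF : ∀ u ∈ F, ∃ h : Fin d → ℝ, ∀ i,
      (i ∈ u → 0 < E.mulVec h i + b i) ∧ (i ∉ u → E.mulVec h i + b i < 0) := by
    intro u hu
    exact (Finset.mem_filter.1 hu).2
  -- Step 1: the set of sign vectors injects into F
  set Y := {y : Fin N → ℝ | (∀ i, y i = 1 ∨ y i = -1) ∧
        ∃ h : Fin d → ℝ, ∀ i, 0 < y i * (E.mulVec h i + b i)} with hY
  have step1 : Y.ncard ≤ F.card := by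
    have hmap : ∀ y ∈ Y, (Finset.univ.filter (fun i => y i = 1)) ∈ F := by
      rintro y ⟨hy1, h, hh⟩
      simp only [hFdef, Finset.mem_filter, Finset.mem_univ, true_and]
      refine ⟨h, fun i => ⟨fun hi => ?_, fun hi => ?_⟩⟩
      · have h2 := hh i
        rw [hi, one_mul] at h2
        exact h2
      · have h1 : y i = -1 := (hy1 i).resolve_left hi
        have h2 := hh i
        rw [h1] at h2
        linarith
    have hinj : Set.InjOn (fun y => Finset.univ.filter (fun i => y i = 1)) Y := by
      rintro y1 ⟨hy1, -⟩ y2 ⟨hy2, -⟩ heq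
      replace heq : (Finset.univ.filter fun i => y1 i = 1)
          = (Finset.univ.filter fun i => y2 i = 1) := heq
      funext i
      have : (y1 i = 1) ↔ (y2 i = 1) := by
        constructor
        · intro h1
          have : i ∈ Finset.univ.filter (fun i => y1 i = 1) :=
            Finset.mem_filter.2 ⟨Finset.mem_univ i, h1⟩
          rw [heq] at this
          exact (Finset.mem_filter.1 this).2
        · intro h1
          have : i ∈ Finset.univ.filter (fun i => y2 i = 1) :=
            Finset.mem_filter.2 ⟨Finset.mem_univ i, h1⟩
          rw [← heq] at this
          exact (Finset.mem_filter.1 this).2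
      rcases hy1 i with h1 | h1 <;> rcases hy2 i with h2 | h2
      · rw [h1, h2]
      · exact absurd (this.1 h1) (by rw [h2]; norm_num)
      · exact absurd (this.2 h2) (by rw [h1]; norm_num)
      · rw [h1, h2]
    calc Y.ncard ≤ (F : Set (Finset (Fin N))).ncard :=
          Set.ncard_le_ncard_of_injOn _ hmap hinj F.finite_toSet
      _ = F.card := by simp
  -- Step 2: vcDim F ≤ d
  have step2 : F.vcDim ≤ d := by
    apply Finset.sup_le
    intro s hs
    have hsh : F.Shatters s := Finset.mem_shatterer.1 hs
    by_contra hcard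
    push_neg at hcard
    -- rows of E indexed by s are linearly dependent
    have hnli : ¬ LinearIndependent ℝ (fun i : {x // x ∈ s} => E i.val) := by
      intro hli
      have := hli.fintype_card_le_finrank
      rw [Module.finrank_fin_fun, Fintype.card_coe] at this
      omega
    obtain ⟨g, hgsum, i₀, hgi₀⟩ := Fintype.not_linearIndependent_iff.1 hnli
    set G : Fin N → ℝ := fun i => if h : i ∈ s then g ⟨i, h⟩ else 0 with hG
    have hGs : ∀ i (h : i ∈ s), G i = g ⟨i, h⟩ := by
      intro i h; simp [hG, h]
    have hrel : ∀ j, ∑ i ∈ s, G i * E i j = 0 := by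
      intro j
      have := congrFun hgsum j
      simp only [Finset.sum_apply, Pi.smul_apply, smul_eq_mul, Pi.zero_apply] at this
      rw [← this, ← Finset.sum_attach s (fun i => G i * E i j)]
      apply Finset.sum_congr rfl
      intro i _
      rw [hGs i.val i.property]
    set c : ℝ := ∑ i ∈ s, G i * b i with hc
    have hGsupp : ∀ i, i ∉ s → G i = 0 := by intro i h; simp [hG, h]
    rcases le_or_gt 0 c with hc0 | hc0
    · exact aux_no_shatter N d E b F hF s G hGsupp hrel hc0 i₀.val i₀.property
        (by rw [hGs i₀.val i₀.property]; exact hgi₀) hsh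
    · refine aux_no_shatter N d E b F hF s (-G) (fun i h => by simp [hGsupp i h])
        (fun j => by simp only [Pi.neg_apply, neg_mul]; rw [Finset.sum_neg_distrib, hrel j, neg_zero])
        ?_ i₀.val i₀.property ?_ hsh
      · simp only [Pi.neg_apply, neg_mul]
        rw [Finset.sum_neg_distrib, ← hc]
        linarith
      · simp only [Pi.neg_apply, neg_ne_zero]
        rw [hGs i₀.val i₀.property]; exact hgi₀
  -- Step 3: Sauer–Shelah
  calc Y.ncard ≤ F.card := step1
    _ ≤ F.shatterer.card := Finset.card_le_card_shatterer F
    _ ≤ ∑ k ∈ Finset.Iic F.vcDim, (Fintype.card (Fin N)).choose k :=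
        Finset.card_shatterer_le_sum_vcDim
    _ ≤ ∑ k ∈ Finset.range (d + 1), N.choose k := by
        rw [Fintype.card_fin]
        apply Finset.sum_le_sum_of_subset
        intro k hk
        rw [Finset.mem_Iic] at hk
        rw [Finset.mem_range]
        omega
end

section
/- Let N, M, c be positive integers and let Y ∈ {0,1}^{N×M} be a binary matrix in which every row contains at most c ones. Then there exist matrices H ∈ ℝ^{N×(2c+1)} and E ∈ ℝ^{M×(2c+1)} such that for all indices i ∈ {1,…,N} and j ∈ {1,…,M}: Y_{ij} = 1 if and only if (H Eᵀ)_{ij} > 0. Equivalently, Y = s(H Eᵀ) where s is the elementwise function with s(z) = 1 for z > 0 and s(z) = 0 otherwise. -/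
open Matrix Polynomial

/-- A binary matrix `Y ∈ {0,1}^{N×M}` with at most `c` ones per row admits an exact
sign decomposition `Y = s(H Eᵀ)` with inner dimension `2c + 1`. -/
theorem exists_sign_decomposition_of_row_ones_le
    (N M c : ℕ) (hN : 0 < N) (hM : 0 < M) (hc : 0 < c)
    (Y : Matrix (Fin N) (Fin M) ℝ)
    (hY01 : ∀ i j, Y i j = 0 ∨ Y i j = 1)
    (hrow : ∀ i, {j | Y i j = 1}.ncard ≤ c) :
    ∃ (H : Matrix (Fin N) (Fin (2 * c + 1)) ℝ) (E : Matrix (Fin M) (Fin (2 * c + 1)) ℝ),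
      ∀ i j, Y i j = 1 ↔ 0 < (H * Eᵀ) i j := by
  classical
  set x : Fin M → ℝ := fun j => ((j : ℕ) : ℝ) with hx
  have hxinj : Function.Injective x := by
    intro a b h
    simp only [hx] at h
    exact Fin.ext (Nat.cast_injective h)
  set S : Fin N → Finset (Fin M) := fun i => Finset.univ.filter (fun j => Y i j = 1) with hS
  set q : Fin N → ℝ[X] := fun i => ∏ j ∈ S i, (X - C (x j)) ^ 2 with hq
  have hqeval : ∀ i j, (q i).eval (x j) = ∏ j' ∈ S i, (x j - x j') ^ 2 := by
    intro i j; simp [hq, eval_prod]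
  have hqpos : ∀ i j, j ∉ S i → 0 < (q i).eval (x j) := by
    intro i j hj
    rw [hqeval]
    apply Finset.prod_pos
    intro j' hj'
    have hne : j ≠ j' := by rintro rfl; exact hj hj'
    have : x j - x j' ≠ 0 := sub_ne_zero.mpr (fun h => hne (hxinj h))
    positivity
  have hqzero : ∀ i j, j ∈ S i → (q i).eval (x j) = 0 := by
    intro i j hj
    rw [hqeval]
    exact Finset.prod_eq_zero hj (by simp)
  set T : Fin N → Finset (Fin M) := fun i => (S i)ᶜ with hT
  set ε : Fin N → ℝ := fun i =>
    if h : (T i).Nonempty then ((T i).inf' h (fun j => (q i).eval (x j))) / 2 else 1 with hε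
  have hεpos : ∀ i, 0 < ε i := by
    intro i
    simp only [hε]
    split
    · next h =>
      have hlt : 0 < (T i).inf' h (fun j => (q i).eval (x j)) := by
        rw [Finset.lt_inf'_iff]
        intro j hj
        exact hqpos i j (by simpa [hT] using hj)
      linarith
    · norm_num
  have hεlt : ∀ i j, j ∉ S i → ε i < (q i).eval (x j) := by
    intro i j hj
    have hjT : j ∈ T i := by simp [hT, hj]
    have hne : (T i).Nonempty := ⟨j, hjT⟩
    simp only [hε, dif_pos hne]
    have h1 : (T i).inf' hne (fun j => (q i).eval (x j)) ≤ (q i).eval (x j) :=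
      Finset.inf'_le _ hjT
    have h2 : 0 < (T i).inf' hne (fun j => (q i).eval (x j)) := by
      rw [Finset.lt_inf'_iff]
      intro j' hj'
      exact hqpos i j' (by simpa [hT] using hj')
    linarith
  set p : Fin N → ℝ[X] := fun i => C (ε i) - q i with hp
  have hdeg : ∀ i, (p i).natDegree < 2 * c + 1 := by
    intro i
    have hcard : (S i).card ≤ c := by
      have h1 := hrow i
      have h2 : {j | Y i j = 1} = ↑(S i) := by
        ext j; simp [hS]
      rw [h2, Set.ncard_coe_finset] at h1
      exact h1
    have h1 : (q i).natDegree ≤ 2 * c := by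
      calc (q i).natDegree ≤ ∑ j ∈ S i, ((X - C (x j)) ^ 2 : ℝ[X]).natDegree :=
            Polynomial.natDegree_prod_le _ _
        _ ≤ ∑ j ∈ S i, 2 := by
            apply Finset.sum_le_sum; intro j _
            calc ((X - C (x j)) ^ 2 : ℝ[X]).natDegree ≤ 2 * (X - C (x j) : ℝ[X]).natDegree :=
                  natDegree_pow_le
              _ = 2 := by rw [natDegree_X_sub_C]
        _ = 2 * (S i).card := by rw [Finset.sum_const, smul_eq_mul, mul_comm]
        _ ≤ 2 * c := by omega
    have h2 := natDegree_sub_le (C (ε i)) (q i)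
    have h3 : (C (ε i) : ℝ[X]).natDegree = 0 := natDegree_C _
    rw [hp]
    simp only
    omega
  refine ⟨Matrix.of (fun i (k : Fin (2 * c + 1)) => (p i).coeff (k : ℕ)), Matrix.of (fun j (k : Fin (2 * c + 1)) => x j ^ (k : ℕ)), ?_⟩
  intro i j
  have hentry : (Matrix.of (fun i (k : Fin (2 * c + 1)) => (p i).coeff (k : ℕ)) *
      (Matrix.of (fun j (k : Fin (2 * c + 1)) => x j ^ (k : ℕ)))ᵀ) i j = (p i).eval (x j) := by
    rw [eval_eq_sum_range' (hdeg i), Matrix.mul_apply,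
      ← Fin.sum_univ_eq_sum_range (fun k => (p i).coeff k * x j ^ k) (2 * c + 1)]
    simp [Matrix.transpose_apply]
  rw [hentry]
  have hpeval : (p i).eval (x j) = ε i - (q i).eval (x j) := by simp [hp]
  constructor
  · intro h
    have hjS : j ∈ S i := by simp [hS, h]
    rw [hpeval, hqzero i j hjS, sub_zero]
    exact hεpos i
  · intro h
    by_contra hne
    have hjS : j ∉ S i := by simp [hS, hne]
    have := hεlt i j hjS
    rw [hpeval] at h
    linarith
end

section
/- Let M and b be positive integers and let S ⊆ {1, …, M} be a union of at most b intervals of consecutive integers (i.e., S has at most b maximal runs of consecutive integers). Then there exists a real polynomial p of degree at most 2b such that for every integer t with 1 ≤ t ≤ M: p(t) > 0 if t ∈ S, and p(t) < 0 if t ∉ S. -/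
open Finset Polynomial

/-- Sign of a product via parity of the number of negative factors. -/
lemma prod_pos_iff_even_neg {α : Type*} [DecidableEq α] (s : Finset α) (f : α → ℝ)
    (h : ∀ a ∈ s, f a ≠ 0) :
    (0 < ∏ a ∈ s, f a ↔ Even (s.filter (fun a => f a < 0)).card) ∧
    ((∏ a ∈ s, f a) < 0 ↔ Odd (s.filter (fun a => f a < 0)).card) := by
  induction s using Finset.induction with
  | empty => simp
  | @insert a s hnot ih =>
    have ha : f a ≠ 0 := h a (mem_insert_self a s)
    have ih' := ih (fun x hx => h x (mem_insert_of_mem hx))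
    rw [Finset.prod_insert hnot, Finset.filter_insert]
    rcases lt_or_gt_of_ne ha with hneg | hpos
    · rw [if_pos hneg, Finset.card_insert_of_notMem (fun hx => hnot (mem_of_mem_filter a hx))]
      constructor
      · rw [Nat.even_add_one, Nat.not_even_iff_odd, ← ih'.2]
        constructor
        · intro hp
          nlinarith
        · intro hp
          exact mul_pos_of_neg_of_neg hneg hp
      · rw [Nat.odd_add_one, Nat.not_odd_iff_even, ← ih'.1]
        have hne : (∏ x ∈ s, f x) ≠ 0 := Finset.prod_ne_zero_iff.2
          (fun x hx => h x (mem_insert_of_mem hx))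
        constructor
        · intro hp
          rcases hne.lt_or_gt with h1 | h1
          · nlinarith
          · exact h1
        · intro hp
          exact mul_neg_of_neg_of_pos hneg hp
    · rw [if_neg (by linarith)]
      constructor
      · rw [← ih'.1]
        exact ⟨fun hp => by nlinarith, fun hp => mul_pos hpos hp⟩
      · rw [← ih'.2]
        exact ⟨fun hp => by nlinarith, fun hp => mul_neg_of_pos_of_neg hpos hp⟩

/-- If `S ⊆ {1, …, M}` consists of at most `b` maximal runs of consecutive integers
(equivalently, at most `b` elements `t ∈ S` with `t - 1 ∉ S`), then there is a real
polynomial of degree at most `2b` positive exactly on `S` among the integer points of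
`{1, …, M}`. -/
theorem exists_polynomial_separating_interval_union
    (M b : ℕ) (hM : 0 < M) (hb : 0 < b) (S : Finset ℕ)
    (hS : S ⊆ Finset.Icc 1 M)
    (hruns : (S.filter (fun t => t - 1 ∉ S)).card ≤ b) :
    ∃ p : Polynomial ℝ, p.natDegree ≤ 2 * b ∧
      ∀ t : ℕ, 1 ≤ t → t ≤ M →
        ((t ∈ S → 0 < p.eval (t : ℝ)) ∧ (t ∉ S → p.eval (t : ℝ) < 0)) := by
  classical
  set A := S.filter (fun t => t - 1 ∉ S) with hA
  set C := S.filter (fun t => t + 1 ∉ S) with hC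
  have hmemS : ∀ s ∈ S, 1 ≤ s ∧ s ≤ M := by
    intro s hs; exact Finset.mem_Icc.1 (hS hs)
  have key : ∀ t : ℕ, ((A.filter (· ≤ t)).card : ℤ) - ((C.filter (· < t)).card : ℤ)
      = if t ∈ S then 1 else 0 := by
    intro t
    induction t with
    | zero =>
      have h0 : 0 ∉ S := fun h => by have := hmemS 0 h; omega
      have e1 : A.filter (· ≤ 0) = ∅ := by
        rw [Finset.filter_eq_empty_iff]; intro a haA
        have := hmemS a (Finset.mem_of_mem_filter a haA)
        omega
      have e2 : C.filter (· < 0) = ∅ := by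
        rw [Finset.filter_eq_empty_iff]; intro a _; omega
      rw [e1, e2, if_neg h0]; simp
    | succ t ih =>
      have eA : (A.filter (· ≤ t + 1)).card
          = (A.filter (· ≤ t)).card + (if t + 1 ∈ A then 1 else 0) := by
        have h1 : A.filter (· ≤ t + 1) = A.filter (fun a => a ≤ t ∨ a = t + 1) :=
          Finset.filter_congr (fun a _ => by omega)
        rw [h1, Finset.filter_or, Finset.card_union_of_disjoint (by
          rw [Finset.disjoint_left]; intro a h1 h2
          simp only [Finset.mem_filter] at h1 h2; omega), Finset.filter_eq']
        split_ifs <;> simp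
      have eC : (C.filter (· < t + 1)).card
          = (C.filter (· < t)).card + (if t ∈ C then 1 else 0) := by
        have h1 : C.filter (· < t + 1) = C.filter (fun c => c < t ∨ c = t) :=
          Finset.filter_congr (fun a _ => by omega)
        rw [h1, Finset.filter_or, Finset.card_union_of_disjoint (by
          rw [Finset.disjoint_left]; intro a h1 h2
          simp only [Finset.mem_filter] at h1 h2; omega), Finset.filter_eq']
        split_ifs <;> simp
      have hmemA : (t + 1 ∈ A) ↔ (t + 1 ∈ S ∧ t ∉ S) := by
        simp [hA, Finset.mem_filter]
      have hmemC : (t ∈ C) ↔ (t ∈ S ∧ t + 1 ∉ S) := by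
        simp [hC, Finset.mem_filter]
      rw [eA, eC]
      push_cast
      by_cases h1 : t ∈ S <;> by_cases h2 : t + 1 ∈ S <;>
        simp [h1, h2, hmemA, hmemC] at ih ⊢ <;> omega
  have hAC : A.card = C.card := by
    have hk := key (M + 1)
    have hfA : A.filter (· ≤ M + 1) = A := by
      apply Finset.filter_true_of_mem
      intro a ha; have := hmemS a (Finset.mem_of_mem_filter a ha); omega
    have hfC : C.filter (· < M + 1) = C := by
      apply Finset.filter_true_of_mem
      intro a ha; have := hmemS a (Finset.mem_of_mem_filter a ha); omega
    have hM1 : M + 1 ∉ S := fun h => by have := hmemS _ h; omega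
    rw [hfA, hfC, if_neg hM1] at hk
    omega
  set fA : ℕ → Polynomial ℝ := fun a => Polynomial.X - Polynomial.C ((a : ℝ) - 1/2) with hfA
  set fC : ℕ → Polynomial ℝ := fun c => Polynomial.X - Polynomial.C ((c : ℝ) + 1/2) with hfC
  set p : Polynomial ℝ := -((∏ a ∈ A, fA a) * (∏ c ∈ C, fC c)) with hp
  have hfAne : ∀ a ∈ A, fA a ≠ 0 := fun a _ => Polynomial.X_sub_C_ne_zero _
  have hfCne : ∀ c ∈ C, fC c ≠ 0 := fun c _ => Polynomial.X_sub_C_ne_zero _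
  have hdegA : (∏ a ∈ A, fA a).natDegree = A.card := by
    rw [Polynomial.natDegree_prod _ _ hfAne]
    simp only [hfA, Polynomial.natDegree_X_sub_C]
    simp
  have hdegC : (∏ c ∈ C, fC c).natDegree = C.card := by
    rw [Polynomial.natDegree_prod _ _ hfCne]
    simp only [hfC, Polynomial.natDegree_X_sub_C]
    simp
  refine ⟨p, ?_, ?_⟩
  · rw [hp, Polynomial.natDegree_neg,
      Polynomial.natDegree_mul (Finset.prod_ne_zero_iff.2 hfAne)
        (Finset.prod_ne_zero_iff.2 hfCne), hdegA, hdegC]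
    omega
  · intro t ht1 htM
    set gA : ℕ → ℝ := fun a => (t : ℝ) - ((a : ℝ) - 1/2) with hgA
    set gC : ℕ → ℝ := fun c => (t : ℝ) - ((c : ℝ) + 1/2) with hgC
    have hev : p.eval (t : ℝ) = -((∏ a ∈ A, gA a) * (∏ c ∈ C, gC c)) := by
      simp [hp, hfA, hfC, hgA, hgC, Polynomial.eval_prod]
    have hgAne : ∀ a ∈ A, gA a ≠ 0 := by
      intro a _ h
      have h1 : (2 * t + 1 : ℝ) = (2 * a : ℝ) := by
        simp only [hgA] at h; linarith
      have h2 : 2 * t + 1 = 2 * a := by exact_mod_cast h1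
      omega
    have hgCne : ∀ c ∈ C, gC c ≠ 0 := by
      intro c _ h
      have h1 : (2 * t : ℝ) = (2 * c + 1 : ℝ) := by
        simp only [hgC] at h; linarith
      have h2 : 2 * t = 2 * c + 1 := by exact_mod_cast h1
      omega
    have eA2 : A.filter (fun a => gA a < 0) = A.filter (fun a => ¬ a ≤ t) := by
      apply Finset.filter_congr
      intro a _
      simp only [hgA]
      constructor
      · intro h hle
        have : (a : ℝ) ≤ t := Nat.cast_le.2 hle
        linarith
      · intro h
        have h' : t + 1 ≤ a := by omega
        have : (t : ℝ) + 1 ≤ (a : ℝ) := by exact_mod_cast h'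
        simp only [not_le] at *
        linarith
    have eC2 : C.filter (fun c => gC c < 0) = C.filter (fun c => ¬ c < t) := by
      apply Finset.filter_congr
      intro c _
      simp only [hgC]
      constructor
      · intro h hlt
        have h' : c + 1 ≤ t := hlt
        have : (c : ℝ) + 1 ≤ t := by exact_mod_cast h'
        linarith
      · intro h
        have h' : t ≤ c := by omega
        have : (t : ℝ) ≤ (c : ℝ) := Nat.cast_le.2 h'
        simp only [not_lt] at *
        linarith
    have cA := Finset.card_filter_add_card_filter_not (s := A) (p := fun a => a ≤ t)
    have cC := Finset.card_filter_add_card_filter_not (s := C) (p := fun c => c < t)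
    have h1 : (A.filter (fun a => gA a < 0)).card + (A.filter (fun a => a ≤ t)).card
        = A.card := by rw [eA2]; omega
    have h2 : (C.filter (fun c => gC c < 0)).card + (C.filter (fun c => c < t)).card
        = C.card := by rw [eC2]; omega
    have LA := prod_pos_iff_even_neg A gA hgAne
    have LC := prod_pos_iff_even_neg C gC hgCne
    have hk := key t
    constructor
    · intro htS
      rw [if_pos htS] at hk
      rw [hev, neg_pos]
      rcases Nat.even_or_odd (A.filter (fun a => gA a < 0)).card with he | he
      · have ho : Odd (C.filter (fun c => gC c < 0)).card := by
          rw [Nat.even_iff] at he; rw [Nat.odd_iff]; omega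
        exact mul_neg_of_pos_of_neg (LA.1.2 he) (LC.2.2 ho)
      · have ho : Even (C.filter (fun c => gC c < 0)).card := by
          rw [Nat.odd_iff] at he; rw [Nat.even_iff]; omega
        exact mul_neg_of_neg_of_pos (LA.2.2 he) (LC.1.2 ho)
    · intro htS
      rw [if_neg htS] at hk
      rw [hev, neg_lt_zero]
      rcases Nat.even_or_odd (A.filter (fun a => gA a < 0)).card with he | he
      · have ho : Even (C.filter (fun c => gC c < 0)).card := by
          rw [Nat.even_iff] at he; rw [Nat.even_iff]; omega
        exact mul_pos (LA.1.2 he) (LC.1.2 ho)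
      · have ho : Odd (C.filter (fun c => gC c < 0)).card := by
          rw [Nat.odd_iff] at he; rw [Nat.odd_iff]; omega
        exact mul_pos_of_neg_of_neg (LA.2.2 he) (LC.2.2 ho)
end

section
/- Let N, M, c be positive integers and let Y ∈ {0,1}^{N×M} be a binary matrix in which every row contains at most c ones. Let V ∈ ℝ^{M×(2c+1)} be the Vandermonde matrix with entries V_{t,j} = t^{j−1} for t ∈ {1,…,M} and j ∈ {1,…,2c+1}. Then there exists a coefficient matrix X ∈ ℝ^{N×(2c+1)} such that for all i ∈ {1,…,N} and t ∈ {1,…,M}: Y_{i,t} = 1 if and only if Σ_{j=1}^{2c+1} X_{i,j} · t^{j−1} > 0. In other words, Y = s(X Vᵀ) with s the elementwise function that maps positive reals to 1 and nonpositive reals to 0. -/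
open Matrix Polynomial

/-- A binary matrix `Y ∈ {0,1}^{N×M}` with at most `c` ones per row can be written as
`Y = s(X Vᵀ)` where `V` is the `M × (2c+1)` Vandermonde matrix with entries
`V_{t,j} = t^{j-1}` (rows indexed by `t = 1, …, M`). -/
theorem exists_vandermonde_sign_decomposition
    (N M c : ℕ) (hN : 0 < N) (hM : 0 < M) (hc : 0 < c)
    (Y : Matrix (Fin N) (Fin M) ℝ)
    (hY01 : ∀ i j, Y i j = 0 ∨ Y i j = 1)
    (hrow : ∀ i, {j | Y i j = 1}.ncard ≤ c)
    (V : Matrix (Fin M) (Fin (2 * c + 1)) ℝ)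
    (hV : ∀ t j, V t j = ((t : ℕ) + 1 : ℝ) ^ (j : ℕ)) :
    ∃ X : Matrix (Fin N) (Fin (2 * c + 1)) ℝ,
      ∀ i t, Y i t = 1 ↔ 0 < (X * Vᵀ) i t := by
  classical
  set S : Fin N → Finset (Fin M) := fun i => Finset.univ.filter (fun s => Y i s = 1) with hS
  set P : Fin N → Polynomial ℝ := fun i =>
    Polynomial.C (1/2) - ∏ s ∈ S i, (Polynomial.X - Polynomial.C ((s : ℕ) + 1 : ℝ)) ^ 2 with hP
  have hcard : ∀ i, (S i).card ≤ c := by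
    intro i
    have : {j | Y i j = 1} = ↑(S i) := by ext j; simp [hS]
    have h := hrow i
    rwa [this, Set.ncard_coe_finset] at h
  have hdeg : ∀ i, (P i).natDegree < 2 * c + 1 := by
    intro i
    have hprod : (∏ s ∈ S i, (Polynomial.X - Polynomial.C ((s : ℕ) + 1 : ℝ)) ^ 2).natDegree
        = 2 * (S i).card := by
      rw [Polynomial.natDegree_prod]
      · have h2 : ∀ s ∈ S i, ((Polynomial.X - Polynomial.C ((s : ℕ) + 1 : ℝ)) ^ 2).natDegree = 2 := by
          intro s _
          rw [Polynomial.natDegree_pow, Polynomial.natDegree_X_sub_C]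
        rw [Finset.sum_congr rfl h2, Finset.sum_const, smul_eq_mul, mul_comm]
      · intro s _
        exact pow_ne_zero _ (Polynomial.X_sub_C_ne_zero _)
    have h1 : (P i).natDegree ≤ 2 * c := by
      refine le_trans (Polynomial.natDegree_sub_le _ _) ?_
      simp only [Polynomial.natDegree_C, hprod]
      simp only [max_le_iff]
      exact ⟨Nat.zero_le _, by have := hcard i; omega⟩
    omega
  set X0 : Matrix (Fin N) (Fin (2 * c + 1)) ℝ := Matrix.of fun i j => (P i).coeff (j : ℕ) with hX0
  refine ⟨X0, ?_⟩
  intro i t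
  have heval : (X0 * Vᵀ) i t
      = (P i).eval ((t : ℕ) + 1 : ℝ) := by
    rw [Polynomial.eval_eq_sum_range' (hdeg i)]
    rw [Matrix.mul_apply]
    rw [← Fin.sum_univ_eq_sum_range (fun j => (P i).coeff j * ((t : ℕ) + 1 : ℝ) ^ j)]
    refine Finset.sum_congr rfl fun j _ => ?_
    simp [hX0, Matrix.transpose_apply, hV]
  have hevalval : (P i).eval ((t : ℕ) + 1 : ℝ)
      = 1/2 - ∏ s ∈ S i, (((t : ℕ) + 1 : ℝ) - ((s : ℕ) + 1)) ^ 2 := by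
    simp [hP, Polynomial.eval_prod]
  rw [heval, hevalval]
  constructor
  · intro hYt
    have htS : t ∈ S i := by simp [hS, hYt]
    have : ∏ s ∈ S i, (((t : ℕ) + 1 : ℝ) - ((s : ℕ) + 1)) ^ 2 = 0 :=
      Finset.prod_eq_zero htS (by ring)
    rw [this]; norm_num
  · intro hpos
    by_contra hne
    have hY0 : Y i t = 0 := (hY01 i t).resolve_right hne
    have htS : t ∉ S i := by simp [hS, hY0]
    have hprod1 : (1 : ℝ) ≤ ∏ s ∈ S i, (((t : ℕ) + 1 : ℝ) - ((s : ℕ) + 1)) ^ 2 := by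
      calc (1:ℝ) = ∏ _s ∈ S i, (1:ℝ) := by simp
      _ ≤ _ := by
          refine Finset.prod_le_prod (fun s _ => by norm_num) (fun s hs => ?_)
          have hts : (t : ℕ) ≠ (s : ℕ) := by
            intro h
            exact htS (by rwa [show s = t from Fin.ext h.symm] at hs)
          have hz : (((t : ℕ) : ℤ) - ((s : ℕ) : ℤ)) ≠ 0 := by
            intro h; apply hts; omega
          have h1 : (1 : ℤ) ≤ (((t : ℕ) : ℤ) - ((s : ℕ) : ℤ)) ^ 2 := by
            rcases lt_or_gt_of_ne hz with h | h <;> nlinarith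
          have : (1 : ℝ) ≤ ((((t : ℕ) : ℤ) - ((s : ℕ) : ℤ) : ℤ) : ℝ) ^ 2 := by
            exact_mod_cast (by exact_mod_cast h1 : (1:ℝ) ≤ (((((t : ℕ) : ℤ) - ((s : ℕ) : ℤ))^2 : ℤ) : ℝ))
          push_cast at this ⊢
          linarith [this]
    linarith
end

section
/- Let N, M, c be positive integers and let Y ∈ {0,1}^{N×M} be a binary matrix in which every row contains at most c ones. Then there exists a real matrix B ∈ ℝ^{N×M} with rank(B) ≤ 2c + 1 over ℝ such that for all i, j: B_{ij} > 0 if Y_{ij} = 1 and B_{ij} < 0 if Y_{ij} = 0. That is, the ±1 sign matrix associated with Y has sign-rank at most 2c + 1. -/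
open Polynomial Finset

/-- The sign matrix of a binary matrix `Y ∈ {0,1}^{N×M}` having at most `c` ones per
row has sign-rank at most `2c + 1`: there is a real matrix `B` of rank at most `2c + 1`
that is positive on the ones of `Y` and negative on the zeros. -/
theorem sign_rank_le_of_row_ones_le
    (N M c : ℕ) (hN : 0 < N) (hM : 0 < M) (hc : 0 < c)
    (Y : Matrix (Fin N) (Fin M) ℝ)
    (hY01 : ∀ i j, Y i j = 0 ∨ Y i j = 1)
    (hrow : ∀ i, {j | Y i j = 1}.ncard ≤ c) :
    ∃ B : Matrix (Fin N) (Fin M) ℝ, B.rank ≤ 2 * c + 1 ∧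
      ∀ i j, (Y i j = 1 → 0 < B i j) ∧ (Y i j = 0 → B i j < 0) := by
  classical
  set T : Fin N → Finset (Fin M) := fun i => Finset.univ.filter (fun j => Y i j = 1) with hT
  have hTcard : ∀ i, (T i).card ≤ c := by
    intro i
    have hset : {j | Y i j = 1} = ↑(T i) := by ext j; simp [hT]
    have := hrow i
    rwa [hset, Set.ncard_coe_finset] at this
  set p : Fin N → ℝ[X] := fun i => C (1/2) - ∏ k ∈ T i, (X - C ((k : ℕ) : ℝ)) ^ 2 with hp
  have hdeg : ∀ i, (p i).natDegree < 2 * c + 1 := by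
    intro i
    have h1 : (∏ k ∈ T i, (X - C ((k : ℕ) : ℝ)) ^ 2).natDegree ≤ 2 * c := by
      refine le_trans (Polynomial.natDegree_prod_le _ _) ?_
      have : ∀ k ∈ T i, ((X - C ((k : ℕ) : ℝ)) ^ 2).natDegree ≤ 2 := by
        intro k _
        calc ((X - C ((k : ℕ) : ℝ)) ^ 2).natDegree
            ≤ 2 * (X - C ((k : ℕ) : ℝ)).natDegree := Polynomial.natDegree_pow_le
          _ = 2 := by rw [Polynomial.natDegree_X_sub_C]
      have hsum := Finset.sum_le_card_nsmul (T i)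
        (fun k => ((X - C ((k : ℕ) : ℝ)) ^ 2).natDegree) 2 this
      have hcard := hTcard i
      simp only [smul_eq_mul] at hsum
      omega
    have h2 : (p i).natDegree ≤ 2 * c := by
      refine le_trans (Polynomial.natDegree_sub_le _ _) ?_
      simp only [Polynomial.natDegree_C, max_le_iff]
      exact ⟨Nat.zero_le _, h1⟩
    omega
  set A : Matrix (Fin N) (Fin (2 * c + 1)) ℝ := fun i t => (p i).coeff t with hA
  set V : Matrix (Fin (2 * c + 1)) (Fin M) ℝ := fun t j => ((j : ℕ) : ℝ) ^ (t : ℕ) with hV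
  have hBval : ∀ i j, (A * V) i j = (p i).eval ((j : ℕ) : ℝ) := by
    intro i j
    rw [Polynomial.eval_eq_sum_range' (hdeg i)]
    rw [Matrix.mul_apply]
    rw [← Fin.sum_univ_eq_sum_range (fun t => (p i).coeff t * ((j : ℕ) : ℝ) ^ t) (2 * c + 1)]
  have hEval : ∀ i (x : ℝ), (p i).eval x = 1/2 - ∏ k ∈ T i, (x - ((k : ℕ) : ℝ)) ^ 2 := by
    intro i x
    simp [hp, Polynomial.eval_prod]
  refine ⟨A * V, ?_, ?_⟩
  · calc (A * V).rank ≤ V.rank := Matrix.rank_mul_le_right A V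
      _ ≤ Fintype.card (Fin (2 * c + 1)) := Matrix.rank_le_card_height V
      _ = 2 * c + 1 := Fintype.card_fin _
  · intro i j
    constructor
    · intro h1
      have hj : j ∈ T i := by simp [hT, h1]
      have hzero : ∏ k ∈ T i, (((j : ℕ) : ℝ) - ((k : ℕ) : ℝ)) ^ 2 = 0 :=
        Finset.prod_eq_zero hj (by simp)
      rw [hBval, hEval, hzero]
      norm_num
    · intro h0
      have hj : j ∉ T i := by
        simp only [hT, Finset.mem_filter, Finset.mem_univ, true_and]
        rw [h0]; norm_num
      have hfac : ∀ k ∈ T i, (1 : ℝ) ≤ (((j : ℕ) : ℝ) - ((k : ℕ) : ℝ)) ^ 2 := by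
        intro k hk
        have hne : j ≠ k := fun h => hj (h ▸ hk)
        have hnev : (j : ℕ) ≠ (k : ℕ) := fun h => hne (Fin.val_injective h)
        have hd : ((j : ℕ) : ℤ) - ((k : ℕ) : ℤ) ≠ 0 := by
          intro h; apply hnev; omega
        have h1 : (1 : ℤ) ≤ (((j : ℕ) : ℤ) - ((k : ℕ) : ℤ)) ^ 2 := by
          nlinarith [Int.one_le_abs hd, sq_abs (((j : ℕ) : ℤ) - ((k : ℕ) : ℤ)),
            abs_nonneg (((j : ℕ) : ℤ) - ((k : ℕ) : ℤ))]
        have h2 : (1 : ℝ) ≤ ((((j : ℕ) : ℤ) - ((k : ℕ) : ℤ) : ℤ) : ℝ) ^ 2 := by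
          exact_mod_cast h1
        calc (1 : ℝ) ≤ ((((j : ℕ) : ℤ) - ((k : ℕ) : ℤ) : ℤ) : ℝ) ^ 2 := h2
          _ = (((j : ℕ) : ℝ) - ((k : ℕ) : ℝ)) ^ 2 := by push_cast; ring
      have hone : (1 : ℝ) ≤ ∏ k ∈ T i, (((j : ℕ) : ℝ) - ((k : ℕ) : ℝ)) ^ 2 :=
        calc (1 : ℝ) = ∏ _k ∈ T i, (1 : ℝ) := (Finset.prod_const_one).symm
          _ ≤ ∏ k ∈ T i, (((j : ℕ) : ℝ) - ((k : ℕ) : ℝ)) ^ 2 :=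
            Finset.prod_le_prod (fun _ _ => by norm_num) hfac
      rw [hBval, hEval]
      linarith
end

section
/- Let N, M, c be positive integers and let Y ∈ {0,1}^{N×M} be a binary matrix in which every row contains at most c ones. Then there exist matrices H ∈ ℝ^{N×(2c+1)} and E ∈ ℝ^{M×(2c+1)} such that for every row i and every pair of columns j, j′ with Y_{ij} = 1 and Y_{ij′} = 0, one has (H Eᵀ)_{ij} > 0 > (H Eᵀ)_{ij′}. In particular, in every row all columns with Y-entry 1 receive strictly higher scores than all columns with Y-entry 0, so the factorization achieves perfect ranking reconstruction of Y. -/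
/-!
Fix a row `i` and let `S ⊆ ℤ` be the (indices of the) columns carrying a `1`. The polynomial
`p(x) = 1/2 - ∏_{s ∈ S} (x - s)²` has degree at most `2c`, equals `1/2` on `S`, and is at most
`1/2 - 1` at every other integer, because there each factor `(x - s)²` is a nonzero integer square.
Row `i` of `H` lists the coefficients of this `p`, and row `j` of `E` lists the powers `j⁰, …, j^{2c}`,
so that `(H Eᵀ)ᵢⱼ = p(j)`.
-/

open Matrix Polynomial

theorem coeff_mul_transpose_pow_apply {R ι κ : Type*} [Semiring R] {n : ℕ}
    (p : ι → R[X]) (hp : ∀ i, (p i).natDegree < n) (x : κ → R) (i : ι) (j : κ) :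
    (of (fun i (k : Fin n) => (p i).coeff k) * (of fun j (k : Fin n) => x j ^ (k : ℕ))ᵀ) i j =
      (p i).eval (x j) := by
  rw [eval_eq_sum_range' (hp i), ← Fin.sum_univ_eq_sum_range (fun k => (p i).coeff k * x j ^ k)]
  rfl

theorem one_le_prod_sq_sub_of_notMem {s : Finset ℤ} {x : ℤ} (hx : x ∉ s) :
    1 ≤ ∏ y ∈ s, ((x : ℝ) - y) ^ 2 := by
  refine Finset.one_le_prod fun y hy => ?_
  have hxy : x - y ≠ 0 := sub_ne_zero.mpr fun h => hx (h ▸ hy)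
  have : (1 : ℝ) ≤ |((x - y : ℤ) : ℝ)| := by exact_mod_cast Int.one_le_abs hxy
  rw [← sq_abs, ← Int.cast_sub]
  nlinarith

noncomputable def separatingPoly (s : Finset ℤ) : ℝ[X] :=
  C (1 / 2) - ∏ y ∈ s, (X - C (y : ℝ)) ^ 2

theorem eval_separatingPoly (s : Finset ℤ) (x : ℝ) :
    (separatingPoly s).eval x = 1 / 2 - ∏ y ∈ s, (x - y) ^ 2 := by
  simp [separatingPoly, eval_prod]

theorem natDegree_separatingPoly_le (s : Finset ℤ) :
    (separatingPoly s).natDegree ≤ 2 * s.card := by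
  have hprod : (∏ y ∈ s, (X - C (y : ℝ)) ^ 2).natDegree ≤ 2 * s.card := by
    refine (natDegree_prod_le _ _).trans ?_
    simp only [natDegree_pow, natDegree_X_sub_C, Finset.sum_const, smul_eq_mul, one_mul,
      mul_comm, le_refl]
  exact (natDegree_sub_le _ _).trans (max_le (by simp) hprod)

theorem eval_separatingPoly_pos_of_mem {s : Finset ℤ} {x : ℤ} (hx : x ∈ s) :
    0 < (separatingPoly s).eval (x : ℝ) := by
  rw [eval_separatingPoly, Finset.prod_eq_zero hx (by simp)]
  norm_num

theorem eval_separatingPoly_neg_of_notMem {s : Finset ℤ} {x : ℤ} (hx : x ∉ s) :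
    (separatingPoly s).eval (x : ℝ) < 0 := by
  rw [eval_separatingPoly]
  linarith [one_le_prod_sq_sub_of_notMem hx]

theorem exists_ranking_reconstruction_factorization_general
    (N M c : ℕ)
    (Y : Matrix (Fin N) (Fin M) ℝ)
    (hrow : ∀ i, {j | Y i j = 1}.ncard ≤ c) :
    ∃ (H : Matrix (Fin N) (Fin (2 * c + 1)) ℝ) (E : Matrix (Fin M) (Fin (2 * c + 1)) ℝ),
      ∀ i j j', Y i j = 1 → Y i j' = 0 →
        (H * Eᵀ) i j' < 0 ∧ 0 < (H * Eᵀ) i j := by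
  classical
  let col : Fin M → ℤ := fun j => (j : ℕ)
  have hcol : Function.Injective col := fun _ _ h => Fin.ext (Nat.cast_injective h)
  let S : Fin N → Finset ℤ := fun i => {j | Y i j = 1}.toFinset.image col
  have hdeg : ∀ i, (separatingPoly (S i)).natDegree < 2 * c + 1 := fun i => by
    have hcard : (S i).card ≤ c :=
      Finset.card_image_le.trans ((Set.ncard_eq_toFinset_card' _).symm.trans_le (hrow i))
    have := natDegree_separatingPoly_le (S i)
    omega
  refine ⟨of fun i k => (separatingPoly (S i)).coeff k, of fun j k => (col j : ℝ) ^ (k : ℕ),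
    fun i j j' hj hj' => ?_⟩
  simp only [coeff_mul_transpose_pow_apply _ hdeg]
  have hjS : col j ∈ S i := hcol.mem_finset_image.mpr (by simpa using hj)
  have hj'S : col j' ∉ S i := fun h => by simp_all [S, hcol.mem_finset_image]
  exact ⟨eval_separatingPoly_neg_of_notMem hj'S, eval_separatingPoly_pos_of_mem hjS⟩

/-- A binary matrix `Y ∈ {0,1}^{N×M}` with at most `c` ones per row admits a rank-
`(2c+1)` factorization `H Eᵀ` achieving perfect ranking reconstruction: in every row,
all columns with `Y`-entry 1 receive positive scores and all columns with `Y`-entry 0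
receive negative scores. -/
theorem exists_ranking_reconstruction_factorization
    (N M c : ℕ) (hN : 0 < N) (hM : 0 < M) (hc : 0 < c)
    (Y : Matrix (Fin N) (Fin M) ℝ)
    (hY01 : ∀ i j, Y i j = 0 ∨ Y i j = 1)
    (hrow : ∀ i, {j | Y i j = 1}.ncard ≤ c) :
    ∃ (H : Matrix (Fin N) (Fin (2 * c + 1)) ℝ) (E : Matrix (Fin M) (Fin (2 * c + 1)) ℝ),
      ∀ i j j', Y i j = 1 → Y i j' = 0 →
        (H * Eᵀ) i j' < 0 ∧ 0 < (H * Eᵀ) i j :=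
  exists_ranking_reconstruction_factorization_general N M c Y hrow
end

section
/- Let m, n, d be positive integers, H ∈ ℝ^{m×d}, E ∈ ℝ^{n×d}, and set Z = H Eᵀ ∈ ℝ^{m×n}. Define the row-wise log-softmax matrix A ∈ ℝ^{m×n} by A_{ij} = Z_{ij} − log(Σ_{k=1}^{n} exp(Z_{ik})). Then the rank of A over ℝ is at most d + 1. -/
/-!
The log-softmax normaliser depends only on the row, so `A = H Eᵀ + c 1ᵀ`, which factors as
`[H | c] * [Eᵀ; 1ᵀ]` through `d + 1` columns.
-/

open Matrix

theorem Matrix.rank_mul_add_vecMulVec_le {R m n k : Type*} [Fintype n] [Fintype k]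
    [CommSemiring R] [StrongRankCondition R]
    (A : Matrix m k R) (B : Matrix k n R) (w : m → R) (v : n → R) :
    (A * B + vecMulVec w v).rank ≤ Fintype.card k + 1 := by
  have hfactor : A * B + vecMulVec w v =
      fromCols A (replicateCol Unit w) * fromRows B (replicateRow Unit v) := by
    rw [fromCols_mul_fromRows, vecMulVec_eq Unit]
  rw [hfactor]
  simpa using (rank_mul_le_left _ _).trans (rank_le_card_width (fromCols A (replicateCol Unit w)))

theorem log_softmax_rank_le_general
    (m n d : ℕ)
    (H : Matrix (Fin m) (Fin d) ℝ) (E : Matrix (Fin n) (Fin d) ℝ)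
    (Z : Matrix (Fin m) (Fin n) ℝ) (hZ : Z = H * Eᵀ)
    (A : Matrix (Fin m) (Fin n) ℝ)
    (hA : ∀ i j, A i j = Z i j - Real.log (∑ k, Real.exp (Z i k))) :
    A.rank ≤ d + 1 := by
  have hshift : A = H * Eᵀ + vecMulVec (fun i => -Real.log (∑ k, Real.exp (Z i k))) 1 := by
    ext i j
    simp [hA, hZ, sub_eq_add_neg]
  rw [hshift]
  simpa using rank_mul_add_vecMulVec_le H Eᵀ _ 1

/-- The row-wise log-softmax of a rank-`d` factorized score matrix `Z = H Eᵀ` has rank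
at most `d + 1`. -/
theorem log_softmax_rank_le
    (m n d : ℕ) (hm : 0 < m) (hn : 0 < n) (hd : 0 < d)
    (H : Matrix (Fin m) (Fin d) ℝ) (E : Matrix (Fin n) (Fin d) ℝ)
    (Z : Matrix (Fin m) (Fin n) ℝ) (hZ : Z = H * Eᵀ)
    (A : Matrix (Fin m) (Fin n) ℝ)
    (hA : ∀ i j, A i j = Z i j - Real.log (∑ k, Real.exp (Z i k))) :
    A.rank ≤ d + 1 :=
  log_softmax_rank_le_general m n d H E Z hZ A hA
end
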